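/- Let A : Matrix (Fin m) (Fin n) ℤ with a bouquet decomposition c_1, …, c_s, bouquet matrix A_B, and map B(u) = Σ_i u_i • c_i, and assume moreover that each c_i is primitive (the greatest common divisor of its coordinates is 1). Then for every u : Fin s → ℤ, u is a circuit of A_B if and only if B(u) is a circuit of A; consequently the set of circuits of A equals {B(u) | u a circuit of A_B}. -/
import Mathlib


/-- The integer kernel of an integer matrix. -/
def kerZ {m n : ℕ} (A : Matrix (Fin m) (Fin n) ℤ) : Set (Fin n → ℤ) :=
  {u | A.mulVec u = 0}

/-- The componentwise positive part `u⁺` of an integer vector. -/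
def posPartZ {n : ℕ} (u : Fin n → ℤ) : Fin n → ℤ := fun i => max (u i) 0

/-- The componentwise negative part `u⁻` of an integer vector. -/
def negPartZ {n : ℕ} (u : Fin n → ℤ) : Fin n → ℤ := fun i => max (-u i) 0

/-- `u = v + w` is a proper conformal decomposition within `kerZ A`. -/
def IsProperConformalDecomp {m n : ℕ} (A : Matrix (Fin m) (Fin n) ℤ)
    (u v w : Fin n → ℤ) : Prop :=
  v ∈ kerZ A ∧ w ∈ kerZ A ∧ v ≠ 0 ∧ w ≠ 0 ∧ u = v + w ∧
    posPartZ u = posPartZ v + posPartZ w ∧ negPartZ u = negPartZ v + negPartZ w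

/-- `u` belongs to the Graver basis of `A`: it is a nonzero element of the integer
kernel admitting no proper conformal decomposition. -/
def InGraver {m n : ℕ} (A : Matrix (Fin m) (Fin n) ℤ) (u : Fin n → ℤ) : Prop :=
  u ∈ kerZ A ∧ u ≠ 0 ∧ ¬ ∃ v w, IsProperConformalDecomp A u v w

/-- `u = v + w` is a proper semiconformal decomposition within `kerZ A`. -/
def IsProperSemiconformalDecomp {m n : ℕ} (A : Matrix (Fin m) (Fin n) ℤ)
    (u v w : Fin n → ℤ) : Prop :=
  v ∈ kerZ A ∧ w ∈ kerZ A ∧ v ≠ 0 ∧ w ≠ 0 ∧ u = v + w ∧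
    ∀ i, (0 < v i → 0 ≤ w i) ∧ (w i < 0 → v i ≤ 0)

/-- `c 0, …, c (s-1)` is a bouquet decomposition of `A`: the supports are nonempty,
pairwise disjoint and cover `Fin n`, and every integer kernel element of `A` is,
on the support of each `c i`, an integer multiple of `c i`. -/
def IsBouquetDecomposition {m n s : ℕ} (A : Matrix (Fin m) (Fin n) ℤ)
    (c : Fin s → Fin n → ℤ) : Prop :=
  (∀ i, (Function.support (c i)).Nonempty) ∧
  (∀ i i', i ≠ i' → Disjoint (Function.support (c i)) (Function.support (c i'))) ∧
  (∀ j, ∃ i, c i j ≠ 0) ∧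
  (∀ v ∈ kerZ A, ∀ i, ∃ t : ℤ, ∀ j ∈ Function.support (c i), v j = t * c i j)

/-- The bouquet matrix `A_B`, whose `i`-th column is `A.mulVec (c i)`. -/
def bouquetMatrix {m n s : ℕ} (A : Matrix (Fin m) (Fin n) ℤ)
    (c : Fin s → Fin n → ℤ) : Matrix (Fin m) (Fin s) ℤ :=
  Matrix.of fun k i => A.mulVec (c i) k

/-- The map `B(u) = Σ_i u_i • c_i`. -/
def Bmap {n s : ℕ} (c : Fin s → Fin n → ℤ) (u : Fin s → ℤ) : Fin n → ℤ :=
  ∑ i, u i • c i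

/-- `u` is a circuit of `A`: a nonzero integer kernel element with coprime coordinates
whose support is minimal among supports of nonzero kernel elements. -/
def IsCircuit {m n : ℕ} (A : Matrix (Fin m) (Fin n) ℤ) (u : Fin n → ℤ) : Prop :=
  u ∈ kerZ A ∧ u ≠ 0 ∧ Finset.univ.gcd u = 1 ∧
    ∀ v ∈ kerZ A, v ≠ 0 → Function.support v ⊆ Function.support u →
      Function.support v = Function.support u

section Helpers

variable {m n s : ℕ} {A : Matrix (Fin m) (Fin n) ℤ} {c : Fin s → Fin n → ℤ}

lemma Bmap_apply (hdisj : ∀ i i', i ≠ i' →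
      Disjoint (Function.support (c i)) (Function.support (c i')))
    (u : Fin s → ℤ) {i : Fin s} {j : Fin n} (hj : c i j ≠ 0) :
    Bmap c u j = u i * c i j := by
  have : Bmap c u j = ∑ k, u k * c k j := by
    simp [Bmap, Finset.sum_apply]
  rw [this]
  refine Finset.sum_eq_single i (fun k _ hk => ?_) (by simp)
  have : j ∉ Function.support (c k) :=
    Set.disjoint_left.mp (hdisj i k (Ne.symm hk)) hj
  simp [Function.mem_support, not_not] at this
  simp [this]

lemma mulVec_Bmap (u : Fin s → ℤ) :
    (bouquetMatrix A c).mulVec u = A.mulVec (Bmap c u) := by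
  funext k
  simp only [Matrix.mulVec, dotProduct, bouquetMatrix, Bmap, Matrix.of_apply,
    Finset.sum_apply, Pi.smul_apply, smul_eq_mul, Finset.mul_sum]
  rw [Finset.sum_comm]
  exact Finset.sum_congr rfl fun i _ => by
    rw [Finset.sum_mul]; exact Finset.sum_congr rfl fun j _ => by ring

lemma Bmap_ne_zero (hc : IsBouquetDecomposition A c) {u : Fin s → ℤ} (hu : u ≠ 0) :
    Bmap c u ≠ 0 := by
  obtain ⟨i, hi⟩ := Function.ne_iff.mp hu
  obtain ⟨j, hj⟩ := hc.1 i
  have := Bmap_apply hc.2.1 u (i := i) (j := j) hj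
  intro h0
  rw [h0] at this
  simp only [Pi.zero_apply] at this
  exact mul_ne_zero hi hj this.symm

lemma exists_Bmap (hc : IsBouquetDecomposition A c) {v : Fin n → ℤ} (hv : v ∈ kerZ A) :
    ∃ t : Fin s → ℤ, Bmap c t = v := by
  choose t ht using hc.2.2.2 v hv
  refine ⟨t, funext fun j => ?_⟩
  obtain ⟨i, hi⟩ := hc.2.2.1 j
  rw [Bmap_apply hc.2.1 t hi, ht i j hi]

lemma gcd_Bmap (hc : IsBouquetDecomposition A c)
    (hprim : ∀ i, Finset.univ.gcd (c i) = 1) (u : Fin s → ℤ) :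
    Finset.univ.gcd (Bmap c u) = Finset.univ.gcd u := by
  refine dvd_antisymm_of_normalize_eq (Finset.normalize_gcd) (Finset.normalize_gcd) ?_ ?_
  · refine Finset.dvd_gcd fun i _ => ?_
    have h1 : Finset.univ.gcd (Bmap c u) ∣ Finset.univ.gcd (fun j => u i * c i j) := by
      refine Finset.dvd_gcd fun j _ => ?_
      by_cases hj : c i j = 0
      · simp [hj]
      · rw [← Bmap_apply hc.2.1 u hj]
        exact Finset.gcd_dvd (Finset.mem_univ j)
    rw [Finset.gcd_mul_left, hprim i, mul_one] at h1
    exact dvd_normalize_iff.mp h1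
  · refine Finset.dvd_gcd fun j _ => ?_
    have : Bmap c u j = ∑ i, u i * c i j := by
      simp [Bmap, Finset.sum_apply]
    rw [this]
    exact Finset.dvd_sum fun i _ =>
      (Finset.gcd_dvd (Finset.mem_univ i)).mul_right _

lemma support_Bmap_subset (hc : IsBouquetDecomposition A c) {t u : Fin s → ℤ}
    (h : Function.support t ⊆ Function.support u) :
    Function.support (Bmap c t) ⊆ Function.support (Bmap c u) := by
  intro j hj
  obtain ⟨i, hi⟩ := hc.2.2.1 j
  rw [Function.mem_support, Bmap_apply hc.2.1 t hi] at hj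
  have ht : t i ≠ 0 := left_ne_zero_of_mul hj
  have hu : u i ≠ 0 := h ht
  rw [Function.mem_support, Bmap_apply hc.2.1 u hi]
  exact mul_ne_zero hu hi

lemma support_subset_of_Bmap (hc : IsBouquetDecomposition A c) {t u : Fin s → ℤ}
    (h : Function.support (Bmap c t) ⊆ Function.support (Bmap c u)) :
    Function.support t ⊆ Function.support u := by
  intro i hi
  obtain ⟨j, hj⟩ := hc.1 i
  have : j ∈ Function.support (Bmap c t) := by
    rw [Function.mem_support, Bmap_apply hc.2.1 t hj]
    exact mul_ne_zero hi hj
  have := h this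
  rw [Function.mem_support, Bmap_apply hc.2.1 u hj] at this
  exact left_ne_zero_of_mul this

end Helpers

theorem circuit_bijection_of_bouquetDecomposition {m n s : ℕ}
    (A : Matrix (Fin m) (Fin n) ℤ) (c : Fin s → Fin n → ℤ)
    (hc : IsBouquetDecomposition A c)
    (hprim : ∀ i, Finset.univ.gcd (c i) = 1) :
    (∀ u : Fin s → ℤ, IsCircuit (bouquetMatrix A c) u ↔ IsCircuit A (Bmap c u)) ∧
    {v : Fin n → ℤ | IsCircuit A v} =
      Bmap c '' {u : Fin s → ℤ | IsCircuit (bouquetMatrix A c) u} := by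
  have key : ∀ u : Fin s → ℤ, IsCircuit (bouquetMatrix A c) u ↔ IsCircuit A (Bmap c u) := by
    intro u
    constructor
    · rintro ⟨hk, hne, hgcd, hmin⟩
      refine ⟨?_, Bmap_ne_zero hc hne, by rw [gcd_Bmap hc hprim]; exact hgcd, ?_⟩
      · show A.mulVec (Bmap c u) = 0
        rw [← mulVec_Bmap]; exact hk
      · intro v hv hvne hsub
        obtain ⟨t, rfl⟩ := exists_Bmap hc hv
        have htk : t ∈ kerZ (bouquetMatrix A c) := by
          show (bouquetMatrix A c).mulVec t = 0
          rw [mulVec_Bmap]; exact hv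
        have htne : t ≠ 0 := by rintro rfl; exact hvne (by simp [Bmap])
        have hts := support_subset_of_Bmap hc hsub
        have heq := hmin t htk htne hts
        exact subset_antisymm hsub (support_Bmap_subset hc heq.symm.subset)
    · rintro ⟨hk, hne, hgcd, hmin⟩
      have huk : u ∈ kerZ (bouquetMatrix A c) := by
        show (bouquetMatrix A c).mulVec u = 0
        rw [mulVec_Bmap]; exact hk
      refine ⟨huk, ?_, by rw [← gcd_Bmap hc hprim]; exact hgcd, ?_⟩
      · rintro rfl; exact hne (by simp [Bmap])
      · intro t htk htne hts
        have hBk : Bmap c t ∈ kerZ A := by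
          show A.mulVec (Bmap c t) = 0
          rw [← mulVec_Bmap]; exact htk
        have heq := hmin _ hBk (Bmap_ne_zero hc htne) (support_Bmap_subset hc hts)
        exact subset_antisymm hts (support_subset_of_Bmap hc heq.symm.subset)
  refine ⟨key, ?_⟩
  ext v
  constructor
  · intro hv
    obtain ⟨t, ht⟩ := exists_Bmap hc hv.1
    exact ⟨t, (key t).mpr (ht ▸ hv), ht⟩
  · rintro ⟨u, hu, rfl⟩
    exact (key u).mp hu
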